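/- arXiv:1206.2624 — 5 statements merged into one kernel-verified Lean document; each statement's English description precedes it below -/
import Mathlib

section
/- For z ∈ ℂ \ (ℝ₊ ∪ {0}), the function Ei is complex-differentiable with derivative Ei'(z) = e^z / z. -/
open scoped Real

/-- The Euler–Mascheroni constant γ = -∫₀^∞ e^{-x} ln x dx. -/
noncomputable def gammaE : ℝ := -∫ x in Set.Ioi (0 : ℝ), Real.exp (-x) * Real.log x

/-- Ei(z) = γ + ln(-z) + ∑_{n=1}^∞ z^n/(n·n!), principal branch of log. -/
noncomputable def Ei (z : ℂ) : ℂ :=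
  (gammaE : ℂ) + Complex.log (-z) +
    ∑' n : ℕ, z ^ (n + 1) / (((n : ℂ) + 1) * (Nat.factorial (n + 1) : ℂ))

/-- z is off the branch cut ℝ₊ ∪ {0}. -/
def offCut (z : ℂ) : Prop := ¬ (z.im = 0 ∧ 0 ≤ z.re)

/-
Off the cut, `-z` lies in the slit plane, so `z ↦ log (-z)` is holomorphic with derivative `1/z`.
The series `∑ zⁿ⁺¹/((n+1)(n+1)!)` is entire and may be differentiated termwise, giving
`∑ zⁿ/(n+1)! = (eᶻ - 1)/z`. The two contributions add up to `eᶻ/z`.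
-/

open Complex Nat

lemma Real.summable_pow_div_factorial_succ (x : ℝ) :
    Summable fun n : ℕ => x ^ n / (n + 1)! := by
  refine (Real.summable_pow_div_factorial |x|).of_norm_bounded fun n => ?_
  rw [norm_div, norm_pow, Real.norm_eq_abs, Real.norm_natCast]
  gcongr
  exact n.le_succ

lemma Complex.mul_tsum_pow_div_factorial_succ (z : ℂ) :
    z * ∑' n : ℕ, z ^ n / (n + 1)! = exp z - 1 := by
  have h : HasSum (fun n : ℕ => z ^ (n + 1) / (n + 1)!) (exp z - 1) := by
    rw [exp_eq_exp_ℂ]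
    simpa using (hasSum_nat_add_iff' 1).mpr (NormedSpace.expSeries_div_hasSum_exp z)
  rw [← tsum_mul_left, ← h.tsum_eq]
  congr 1 with n
  ring

lemma neg_mem_slitPlane_iff_offCut {z : ℂ} : -z ∈ slitPlane ↔ offCut z := by
  rw [mem_slitPlane_iff, offCut, neg_re, neg_im, neg_pos, neg_ne_zero, not_and_or, not_le]
  tauto

-- `Ei z` unfolds definitionally to `gammaE + log (-z) + eiSeries z`.
noncomputable def eiSeries (z : ℂ) : ℂ :=
  ∑' n : ℕ, z ^ (n + 1) / (((n : ℂ) + 1) * (n + 1)!)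

lemma hasDerivAt_pow_succ_div_mul_factorial (n : ℕ) (w : ℂ) :
    HasDerivAt (fun w : ℂ => w ^ (n + 1) / (((n : ℂ) + 1) * (n + 1)!)) (w ^ n / (n + 1)!) w := by
  have h := (hasDerivAt_pow (n + 1) w).div_const (((n : ℂ) + 1) * (n + 1)!)
  rwa [Nat.add_sub_cancel, Nat.cast_add_one, mul_div_mul_left _ _ (Nat.cast_add_one_ne_zero n)] at h

lemma norm_pow_succ_div_mul_factorial_le (n : ℕ) (z : ℂ) :
    ‖z ^ (n + 1) / (((n : ℂ) + 1) * (n + 1)!)‖ ≤ ‖z‖ * (‖z‖ ^ n / (n + 1)!) := by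
  rw [norm_div, norm_pow, norm_mul, ← Nat.cast_add_one, norm_natCast, norm_natCast, pow_succ,
    mul_comm _ ‖z‖, mul_div_assoc]
  gcongr
  exact_mod_cast Nat.le_mul_of_pos_left _ n.succ_pos

lemma hasDerivAt_eiSeries (z : ℂ) :
    HasDerivAt eiSeries (∑' n : ℕ, z ^ n / (n + 1)!) z := by
  have hz : z ∈ Metric.ball (0 : ℂ) (‖z‖ + 1) := by simp
  refine hasDerivAt_tsum_of_isPreconnected (Real.summable_pow_div_factorial_succ (‖z‖ + 1))
    Metric.isOpen_ball (convex_ball _ _).isPreconnected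
    (fun n w _ => hasDerivAt_pow_succ_div_mul_factorial n w) (fun n w hw => ?_) hz ?_ hz
  · rw [norm_div, norm_pow, norm_natCast]
    gcongr
    exact (mem_ball_zero_iff.mp hw).le
  · exact .of_norm_bounded ((Real.summable_pow_div_factorial_succ ‖z‖).mul_left ‖z‖)
      (norm_pow_succ_div_mul_factorial_le · z)

/-- For z off the cut, Ei is complex-differentiable with Ei'(z) = e^z/z. -/
theorem stmt4 (z : ℂ) (hz : offCut z) :
    HasDerivAt Ei (Complex.exp z / z) z := by
  have hslit : -z ∈ slitPlane := neg_mem_slitPlane_iff_offCut.mpr hz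
  have hz0 : z ≠ 0 := neg_ne_zero.mp (slitPlane_ne_zero hslit)
  have hlog : HasDerivAt (fun w : ℂ => log (-w)) z⁻¹ z :=
    ((hasDerivAt_log hslit).comp z (hasDerivAt_neg z)).congr_deriv (by simp)
  refine (((hasDerivAt_const z (gammaE : ℂ)).add hlog).add (hasDerivAt_eiSeries z)).congr_deriv ?_
  rw [zero_add, eq_div_iff hz0, add_mul, inv_mul_cancel₀ hz0]
  linear_combination mul_tsum_pow_div_factorial_succ z
end

section
/- The regularized Green's function satisfies the symmetry conj(g^r(z, λ)) · X(z, λ) = g^r(z, λ) for all z ≠ 0 and λ ≠ 0; in particular X(z,λ) · conj(g^r) = g^r where X(z,λ) = e^{-iλz - iλ̄z̄}. -/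
open scoped Real

/-- The continuous extension of Ei(z) + Ei(z̄):
2γ + 2 ln|z| + ∑_{n=1}^∞ (z^n + z̄^n)/(n·n!). -/
noncomputable def EiSum (w : ℂ) : ℂ :=
  2 * (gammaE : ℂ) + 2 * (Real.log ‖w‖ : ℂ) +
    ∑' n : ℕ, (w ^ (n + 1) + ((starRingEnd ℂ) w) ^ (n + 1)) /
      (((n : ℂ) + 1) * (Nat.factorial (n + 1) : ℂ))


/-- X(z,λ) = e^{-iλz - iλ̄z̄}. -/
noncomputable def Xf (z l : ℂ) : ℂ :=
  Complex.exp (-Complex.I * l * z - Complex.I * (starRingEnd ℂ) l * (starRingEnd ℂ) z)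

/-- 𝒢(λ) = (1/4)(e^{-iλ} + e^{iλ̄})(Ei(iλ) + Ei(-iλ̄)), via the continuous extension. -/
noncomputable def Gf (l : ℂ) : ℂ :=
  (1 / 4) * (Complex.exp (-Complex.I * l) + Complex.exp (Complex.I * (starRingEnd ℂ) l)) *
    EiSum (Complex.I * l)

/-- The regularized Green's function g^r(z,λ). -/
noncomputable def grE (z l : ℂ) : ℂ :=
  (1 / (16 * (Real.pi : ℂ))) * Complex.exp (-Complex.I * l * z) * EiSum (Complex.I * l * z) -
    (1 / (16 * (Real.pi : ℂ))) * (1 + Xf z l) * Gf l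

/-! Both Ei-sums and 𝒢(λ) are real, and X = u / ū for u = e^{-iλz} with |X| = 1, so each of the two
terms of g^r is a real multiple of some w with w̄ · X = w. -/

open ComplexConjugate

lemma conj_EiSum (w : ℂ) : conj (EiSum w) = EiSum w := by
  have hterm : ∀ n : ℕ, conj ((w ^ (n + 1) + conj w ^ (n + 1)) /
      (((n : ℂ) + 1) * (Nat.factorial (n + 1) : ℂ))) =
      (w ^ (n + 1) + conj w ^ (n + 1)) / (((n : ℂ) + 1) * (Nat.factorial (n + 1) : ℂ)) := by
    intro n
    simp [map_div₀, add_comm]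
  simp only [EiSum, map_add, map_mul, Complex.conj_tsum, hterm, Complex.conj_ofReal, map_ofNat]

lemma conj_Gf (l : ℂ) : conj (Gf l) = Gf l := by
  have hexp : conj (Complex.exp (-Complex.I * l)) = Complex.exp (Complex.I * conj l) := by
    rw [← Complex.exp_conj]
    simp
  simp only [Gf, map_mul, map_add, conj_EiSum, hexp, ← Complex.exp_conj, map_div₀, map_one,
    map_ofNat, Complex.conj_conj, Complex.conj_I]
  ring_nf

lemma conj_Xf_mul_Xf (z l : ℂ) : conj (Xf z l) * Xf z l = 1 := by
  rw [Xf, ← Complex.exp_conj, ← Complex.exp_add, ← Complex.exp_zero]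
  congr 1
  simp only [map_sub, map_mul, map_neg, Complex.conj_conj, Complex.conj_I]
  ring

lemma conj_one_add_Xf_mul_Xf (z l : ℂ) : conj (1 + Xf z l) * Xf z l = 1 + Xf z l := by
  rw [map_add, map_one, add_mul, conj_Xf_mul_Xf, one_mul, add_comm]

lemma conj_exp_mul_Xf (z l : ℂ) :
    conj (Complex.exp (-Complex.I * l * z)) * Xf z l = Complex.exp (-Complex.I * l * z) := by
  rw [Xf, ← Complex.exp_conj, ← Complex.exp_add]
  congr 1
  simp only [map_mul, map_neg, Complex.conj_I]
  ring

theorem stmt8_general (z l : ℂ) :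
    (starRingEnd ℂ) (grE z l) * Xf z l = grE z l := by
  have hc : conj (1 / (16 * (π : ℂ))) = 1 / (16 * (π : ℂ)) := by simp [map_ofNat]
  simp only [grE, map_sub, map_mul, hc, conj_EiSum, conj_Gf]
  linear_combination (1 / (16 * (π : ℂ)) * EiSum (Complex.I * l * z)) * conj_exp_mul_Xf z l -
    (1 / (16 * (π : ℂ)) * Gf l) * conj_one_add_Xf_mul_Xf z l

/-- Symmetry of the regularized Green's function: conj(g^r(z,λ)) · X(z,λ) = g^r(z,λ). -/
theorem stmt8 (z l : ℂ) (hz : z ≠ 0) (hl : l ≠ 0) :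
    (starRingEnd ℂ) (grE z l) * Xf z l = grE z l :=
  stmt8_general z l
end

section
/- Suppose for every t ∈ ℝ, b(λ, t) = e^{8i(λ³ + λ̄³)t} b(λ, 0) and also b(λ, t) = e^{i(λc + λ̄c̄)t} b(λ, 0), for all λ in a nonempty open set U ⊆ ℂ \ {0}, where b(·, 0) : U → ℂ is continuous and c ∈ ℂ is fixed. Then b(λ, 0) = 0 for all λ ∈ U. -/
/-!
If `b(λ, 0) ≠ 0` at some `λ ∈ U`, continuity keeps it nonzero on a small disc, and there the two
evolution laws force the phases to agree for every `t`, hence `8(z³ + z̄³) = zc + z̄c̄` on the disc.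
Along a horizontal segment `z = λ + x` this is a cubic in `x` with leading coefficient `16`
vanishing at infinitely many points, which is absurd.
-/

open Complex ComplexConjugate Polynomial

theorem Cubic.a_eq_zero_of_infinite_roots {K : Type*} [Field K] {a b c d : K}
    (h : {x : K | a * x ^ 3 + b * x ^ 2 + c * x + d = 0}.Infinite) : a = 0 := by
  have hP : (Cubic.mk a b c d).toPoly = 0 :=
    eq_zero_of_infinite_isRoot _ (by simpa [Cubic.toPoly] using h)
  exact congrArg Cubic.a ((Cubic.toPoly_eq_zero_iff _).mp hP)

theorem Complex.eq_of_forall_exp_mul_ofReal_eq {p q : ℂ}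
    (h : ∀ t : ℝ, exp (p * t) = exp (q * t)) : p = q := by
  have hderiv (r : ℂ) : HasDerivAt (fun t : ℝ => exp (r * t)) r 0 := by
    simpa using (((hasDerivAt_id (0 : ℝ)).ofReal_comp).const_mul r).cexp
  exact (hderiv p).unique (funext h ▸ hderiv q)

theorem exists_mem_ball_cubic_phase_ne (l c : ℂ) {ε : ℝ} (hε : 0 < ε) :
    ∃ z ∈ Metric.ball l ε, 8 * (z ^ 3 + conj z ^ 3) ≠ z * c + conj z * conj c := by
  by_contra! h
  have hline : ∀ x ∈ Set.Ioo (-ε) ε, (16 : ℂ) * x ^ 3 + 24 * (l + conj l) * x ^ 2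
      + (24 * (l ^ 2 + conj l ^ 2) - c - conj c) * x
      + (8 * (l ^ 3 + conj l ^ 3) - l * c - conj l * conj c) = 0 := by
    intro x hx
    have hz : l + x ∈ Metric.ball l ε := by
      simpa [Complex.dist_eq, abs_lt] using hx
    have hphase := h _ hz
    simp only [map_add, conj_ofReal] at hphase
    linear_combination hphase
  have hinf : (ofReal '' Set.Ioo (-ε) ε).Infinite :=
    (Set.Ioo_infinite (by linarith)).image ofReal_injective.injOn
  have h16 := Cubic.a_eq_zero_of_infinite_roots (hinf.mono (by
    rintro _ ⟨x, hx, rfl⟩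
    exact hline x hx))
  norm_num at h16

theorem stmt13_general (U : Set ℂ) (hUopen : IsOpen U)
    (b : ℂ → ℝ → ℂ) (c : ℂ)
    (hcont : ContinuousOn (fun l => b l 0) U)
    (h1 : ∀ t : ℝ, ∀ l ∈ U,
      b l t = Complex.exp (8 * Complex.I * (l ^ 3 + ((starRingEnd ℂ) l) ^ 3) * t) * b l 0)
    (h2 : ∀ t : ℝ, ∀ l ∈ U,
      b l t = Complex.exp (Complex.I * (l * c + (starRingEnd ℂ) l * (starRingEnd ℂ) c) * t) * b l 0) :
    ∀ l ∈ U, b l 0 = 0 := by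
  intro l hl
  by_contra hb
  obtain ⟨ε, hε, hball⟩ : ∃ ε > 0, Metric.ball l ε ⊆ U ∩ (fun z => b z 0) ⁻¹' {0}ᶜ :=
    Metric.isOpen_iff.mp (hcont.isOpen_inter_preimage hUopen isOpen_compl_singleton) l ⟨hl, hb⟩
  obtain ⟨z, hz, hne⟩ := exists_mem_ball_cubic_phase_ne l c hε
  obtain ⟨hzU, hbz⟩ := hball hz
  have hexp : ∀ t : ℝ, exp (8 * I * (z ^ 3 + conj z ^ 3) * t)
      = exp (I * (z * c + conj z * conj c) * t) :=
    fun t => mul_right_cancel₀ hbz ((h1 t z hzU).symm.trans (h2 t z hzU))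
  apply hne
  apply mul_left_cancel₀ I_ne_zero
  linear_combination eq_of_forall_exp_mul_ofReal_eq hexp

/-- Soliton-vanishing argument: if b obeys both time-evolution laws
b(λ,t) = e^{8i(λ³+λ̄³)t} b(λ,0) and b(λ,t) = e^{i(λc+λ̄c̄)t} b(λ,0) on a nonempty
open set U ⊆ ℂ \ {0}, with b(·,0) continuous on U, then b(·,0) ≡ 0 on U. -/
theorem stmt13 (U : Set ℂ) (hUopen : IsOpen U) (hUne : U.Nonempty)
    (hU0 : (0 : ℂ) ∉ U) (b : ℂ → ℝ → ℂ) (c : ℂ)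
    (hcont : ContinuousOn (fun l => b l 0) U)
    (h1 : ∀ t : ℝ, ∀ l ∈ U,
      b l t = Complex.exp (8 * Complex.I * (l ^ 3 + ((starRingEnd ℂ) l) ^ 3) * t) * b l 0)
    (h2 : ∀ t : ℝ, ∀ l ∈ U,
      b l t = Complex.exp (Complex.I * (l * c + (starRingEnd ℂ) l * (starRingEnd ℂ) c) * t) * b l 0) :
    ∀ l ∈ U, b l 0 = 0 :=
  stmt13_general U hUopen b c hcont h1 h2
end

section
/- Let Δ : ℂ → ℂ be continuous, real-valued, with Δ(λ) → 1 as |λ| → ∞, and suppose Δ is holomorphic on ℂ \ (E ∪ {0}) where E = {λ : Δ(λ) = 0}. Then E = ∅ and Δ ≡ 1 on ℂ. -/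
/-!
The zero set `E` is closed and, since `Δ → 1` at infinity, bounded; so `E ∪ {0}` has a point
`z₀` of maximal modulus `m`. Outside the closed disc of radius `m`, which is connected, `Δ` is
holomorphic and real-valued, hence constant by the open mapping theorem, and the constant is `1`
by the limit at infinity. By continuity `Δ = 1` on `‖z‖ ≥ m`, in particular at `z₀`, so `z₀ ∉ E`;
thus `z₀ = 0`, `m = 0`, and `Δ ≡ 1`.
-/

open Filter Set Metric Complex

theorem Complex.compl_closedBall_eq_image_polar (x : ℂ) (r : ℝ) :
    (closedBall x r)ᶜ = (fun p : ℝ × ℝ => x + p.1 * exp (p.2 * I)) '' (Ioi r ×ˢ univ) := by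
  ext w
  constructor
  · intro hw
    refine ⟨(‖w - x‖, arg (w - x)), ⟨?_, mem_univ _⟩, ?_⟩
    · simpa [dist_eq] using hw
    · simp only [norm_mul_exp_arg_mul_I, add_sub_cancel]
  · rintro ⟨⟨t, θ⟩, ⟨ht, -⟩, rfl⟩
    have ht : r < t := ht
    simp only [mem_compl_iff, mem_closedBall, dist_eq, add_sub_cancel_left, norm_mul,
      norm_exp_ofReal_mul_I, mul_one, norm_real, Real.norm_eq_abs, not_le]
    exact ht.trans_le (le_abs_self t)

theorem Complex.isConnected_compl_closedBall (x : ℂ) (r : ℝ) : IsConnected (closedBall x r)ᶜ := by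
  rw [compl_closedBall_eq_image_polar]
  exact (isConnected_Ioi.prod isConnected_univ).image _ (by fun_prop : Continuous _).continuousOn

theorem Complex.eqOn_compl_ball_of_tendsto_cobounded {f : ℂ → ℂ} {x c : ℂ} {r : ℝ}
    (hf : Continuous f) (hd : DifferentiableOn ℂ f (closedBall x r)ᶜ)
    (hre : ∀ z ∉ closedBall x r, (f z).im = 0) (hlim : Tendsto f (Bornology.cobounded ℂ) (nhds c)) :
    EqOn f (fun _ => c) (ball x r)ᶜ := by
  have hopen : IsOpen (closedBall x r)ᶜ := isClosed_closedBall.isOpen_compl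
  obtain ⟨c', hc'⟩ := (hd.analyticOnNhd hopen).eq_const_of_im_eq_const hre hopen
    (isConnected_compl_closedBall x r)
  have hc : c' = c := by
    refine tendsto_nhds_unique (tendsto_const_nhds.congr' ?_) hlim
    filter_upwards [Bornology.isBounded_def.mp isBounded_closedBall] with z hz using (hc' z hz).symm
  rw [← interior_closedBall' x r, ← closure_compl]
  exact EqOn.closure (fun z hz => (hc' z hz).trans hc) hf continuous_const

/-- If Δ is continuous, real-valued, tends to 1 at infinity, and is holomorphic
off its zero set E and 0, then E = ∅ and Δ ≡ 1. -/
theorem stmt16 (Δ : ℂ → ℂ) (hcont : Continuous Δ)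
    (hreal : ∀ l : ℂ, (Δ l).im = 0)
    (hlim : Filter.Tendsto Δ (Filter.comap (fun z : ℂ => ‖z‖) Filter.atTop) (nhds 1))
    (hhol : DifferentiableOn ℂ Δ ({l : ℂ | Δ l = 0} ∪ {0})ᶜ) :
    (∀ l : ℂ, Δ l ≠ 0) ∧ ∀ l : ℂ, Δ l = 1 := by
  set K := {l : ℂ | Δ l = 0} ∪ {0}
  rw [comap_norm_atTop] at hlim
  have hK : IsCompact K := by
    have hE : Bornology.IsBounded {l : ℂ | Δ l = 0} :=
      Bornology.isBounded_def.mpr (hlim.eventually_ne one_ne_zero)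
    exact isCompact_of_isClosed_isBounded
      ((isClosed_eq hcont continuous_const).union isClosed_singleton)
      (hE.union Bornology.isBounded_singleton)
  obtain ⟨z₀, hz₀K, hz₀max⟩ := hK.exists_isMaxOn ⟨0, Or.inr rfl⟩ continuous_norm.continuousOn
  have hsub : (closedBall 0 ‖z₀‖)ᶜ ⊆ Kᶜ := fun z hz hzK =>
    hz (mem_closedBall_zero_iff.mpr (hz₀max hzK))
  have hone := eqOn_compl_ball_of_tendsto_cobounded hcont (hhol.mono hsub) (fun z _ => hreal z) hlim
  have hz₀ : z₀ = 0 := by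
    refine hz₀K.resolve_left fun hzero => one_ne_zero ((hone ?_).symm.trans hzero)
    simp
  have hΔ : ∀ l, Δ l = 1 := fun l => hone (by simp [hz₀])
  exact ⟨fun l => by simp [hΔ l], hΔ⟩
end

section
/- Let v : ℂ → ℂ satisfy |v(z)| ≤ q(1+|z|)^{-4-ε} for some q, ε > 0, and suppose |g^r(w,λ)| ≤ (C/|λ|)(1 + 1/|w|) for all w ≠ 0, λ ≠ 0, and |g^r(w,λ)| ≤ C(|ln|λ|²| + |ln|w|²| + 1) when |λ||w| < 1 with |λ| > 1. Then ∫∫_ℂ ∫∫_ℂ |g^r(z-ξ,λ)|² |v(ξ)|² (1+|ξ|)^{6+ε} (1+|z|)^{-(6+ε)} dz dξ → 0 as |λ| → ∞; i.e. the Hilbert–Schmidt norm of the operator H^r(λ) tends to zero. -/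
/-!
For `|λ| > 1` the two bounds on `g` combine into `|g(w, λ)|² ≤ 81 C² max (1 / |w|) 1`, uniformly
in `λ`: in the region `|λ| |w| < 1` we have `|λ| < 1 / |w|`, so the logarithms are absorbed by
`√(1 / |w|)`. Since `1 / |w|` is locally integrable in two real dimensions and `v` decays fast
enough, this gives an integrable majorant on `ℂ × ℂ`, while the first bound alone makes the
integrand tend to `0` off the diagonal. Dominated convergence on the product concludes.
-/

open MeasureTheory Filter Set Metric Topology

theorem integrable_indicator_ball_norm_inv {E : Type*} [NormedAddCommGroup E] [NormedSpace ℝ E]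
    [FiniteDimensional ℝ E] [MeasurableSpace E] [BorelSpace E] {μ : Measure E}
    [μ.IsAddHaarMeasure] (hE : 1 < Module.finrank ℝ E) (r : ℝ) :
    Integrable ((ball (0 : E) r).indicator fun x => ‖x‖⁻¹) μ := by
  rw [integrable_indicator_iff measurableSet_ball]
  refine integrableOn_ball_of_norm_le_rpow hE.le (C := 1) (α := 1) (by exact_mod_cast hE) ?_
    (by fun_prop)
  filter_upwards with x
  simp [Real.rpow_neg_one]

theorem ae_prod_ne {α : Type*} [MeasurableSpace α] [MeasurableEq α] {μ ν : Measure α}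
    [SFinite ν] [NullSingletonClass ν] : ∀ᵐ p ∂μ.prod ν, p.1 ≠ p.2 := by
  change ∀ᵐ p ∂μ.prod ν, p ∈ (diagonal α)ᶜ
  rw [Measure.ae_prod_mem_iff_ae_ae_mem measurableSet_diagonal.compl]
  exact ae_of_all _ fun x => ((countable_singleton x).ae_notMem ν).mono fun y hy => Ne.symm hy

theorem tendsto_integral_integral_of_dominated_convergence {α β ι E : Type*}
    [MeasurableSpace α] [MeasurableSpace β] {μ : Measure α} {ν : Measure β} [SFinite μ]
    [SFinite ν] [NormedAddCommGroup E] [NormedSpace ℝ E] {l : Filter ι}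
    [l.IsCountablyGenerated] {F : ι → α → β → E} {f : α × β → E} (bound : α × β → ℝ)
    (hF_meas : ∀ᶠ i in l, AEStronglyMeasurable (Function.uncurry (F i)) (μ.prod ν))
    (h_bound : ∀ᶠ i in l, ∀ᵐ p ∂μ.prod ν, ‖F i p.1 p.2‖ ≤ bound p)
    (bound_integrable : Integrable bound (μ.prod ν))
    (h_lim : ∀ᵐ p ∂μ.prod ν, Tendsto (fun i => F i p.1 p.2) l (𝓝 (f p))) :
    Tendsto (fun i => ∫ x, ∫ y, F i x y ∂ν ∂μ) l (𝓝 (∫ p, f p ∂μ.prod ν)) := by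
  refine (tendsto_integral_filter_of_dominated_convergence bound hF_meas h_bound
    bound_integrable h_lim).congr' ?_
  filter_upwards [hF_meas, h_bound] with i hm hb
  exact (integral_integral (bound_integrable.mono' hm hb)).symm

theorem log_sq_add_log_sq_add_one_le {a b : ℝ} (ha : 0 < a) (hb : 1 < b) (hab : b * a < 1) :
    |Real.log (b ^ 2)| + |Real.log (a ^ 2)| + 1 ≤ 9 * √a⁻¹ := by
  -- `b < 1 / a`, so both logarithms are at most `2 log (1 / a) ≤ 4 √(1 / a)`.
  have ha1 : a < 1 := by nlinarith
  have hlogb : 0 ≤ Real.log b := Real.log_nonneg hb.le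
  have hba : Real.log b ≤ Real.log a⁻¹ :=
    Real.log_le_log (by linarith) (by rw [← one_div, le_div_iff₀ ha]; exact hab.le)
  have hsqrt : Real.log a⁻¹ ≤ 2 * √a⁻¹ := by
    simpa [Real.sqrt_eq_rpow, div_eq_mul_inv, mul_comm] using
      Real.log_le_rpow_div (inv_nonneg.2 ha.le) (by norm_num : (0 : ℝ) < 1 / 2)
  have hone : 1 ≤ √a⁻¹ := Real.one_le_sqrt.2 ((one_le_inv₀ ha).2 ha1.le)
  rw [Real.log_pow, Real.log_pow, abs_mul, abs_mul, abs_of_nonneg hlogb,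
    abs_of_nonpos (Real.log_nonpos ha.le ha1.le), ← Real.log_inv]
  push_cast
  linarith

theorem sq_le_of_near_far_bounds {C a b x : ℝ} (hC : 0 ≤ C) (ha : 0 < a) (hb : 1 < b)
    (hx : 0 ≤ x) (h_far : x ≤ C / b * (1 + 1 / a))
    (h_near : b * a < 1 → x ≤ C * (|Real.log (b ^ 2)| + |Real.log (a ^ 2)| + 1)) :
    x ^ 2 ≤ 81 * C ^ 2 * max a⁻¹ 1 := by
  by_cases hab : b * a < 1
  · have h9 : x ≤ 9 * C * √a⁻¹ := by
      have hlog := log_sq_add_log_sq_add_one_le ha hb hab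
      calc x ≤ _ := h_near hab
        _ ≤ C * (9 * √a⁻¹) := by gcongr
        _ = _ := by ring
    calc x ^ 2 ≤ (9 * C * √a⁻¹) ^ 2 := by gcongr
      _ = 81 * C ^ 2 * a⁻¹ := by rw [mul_pow, Real.sq_sqrt (by positivity)]; ring
      _ ≤ 81 * C ^ 2 * max a⁻¹ 1 := by gcongr; exact le_max_left _ _
  · have h2 : x ≤ 2 * C := by
      have : 1 / a ≤ b := by rw [div_le_iff₀ ha]; linarith
      refine h_far.trans ?_
      rw [div_mul_eq_mul_div, div_le_iff₀ (by linarith)]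
      nlinarith
    calc x ^ 2 ≤ (2 * C) ^ 2 := by gcongr
      _ ≤ 81 * C ^ 2 * max a⁻¹ 1 := by nlinarith [le_max_right a⁻¹ 1, sq_nonneg C]

theorem max_norm_inv_one_mul_le {E : Type*} [SeminormedAddCommGroup E] (x : E) {t : ℝ}
    (ht₀ : 0 ≤ t) (ht₁ : t ≤ 1) :
    max ‖x‖⁻¹ 1 * t ≤ (ball (0 : E) 1).indicator (fun y => ‖y‖⁻¹) x + t := by
  by_cases hx : x ∈ ball (0 : E) 1
  · rw [indicator_of_mem hx]
    have hinv : 0 ≤ ‖x‖⁻¹ := inv_nonneg.2 (norm_nonneg x)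
    rw [max_mul_of_nonneg _ _ ht₀]
    exact max_le (by nlinarith) (by linarith)
  · have : ‖x‖⁻¹ ≤ 1 := inv_le_one_of_one_le₀ (by simpa using hx)
    simp [indicator_of_notMem hx, max_eq_right this]

theorem sq_mul_rpow_le_of_le_rpow {q t y a b : ℝ} (ht : 0 < t) (hy : 0 ≤ y)
    (h : y ≤ q * t ^ (-a)) : y ^ 2 * t ^ b ≤ q ^ 2 * t ^ (b - 2 * a) := by
  calc y ^ 2 * t ^ b ≤ (q * t ^ (-a)) ^ 2 * t ^ b := by gcongr
    _ = q ^ 2 * t ^ (b - 2 * a) := by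
      rw [mul_pow, ← Real.rpow_natCast (t ^ (-a)), ← Real.rpow_mul ht.le, mul_assoc,
        ← Real.rpow_add ht]
      ring_nf

noncomputable def hilbertSchmidtIntegrand (g : ℂ → ℂ → ℂ) (v : ℂ → ℂ) (ε : ℝ) (l z ξ : ℂ) : ℝ :=
  ‖g l (z - ξ)‖ ^ 2 * ‖v ξ‖ ^ 2 * (1 + ‖ξ‖) ^ (6 + ε) * (1 + ‖z‖) ^ (-(6 + ε))

noncomputable def hilbertSchmidtBound (q ε C : ℝ) (z ξ : ℂ) : ℝ :=
  81 * C ^ 2 * q ^ 2 *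
    ((1 + ‖ξ‖) ^ (-(2 + ε)) * (ball (0 : ℂ) 1).indicator (fun w => ‖w‖⁻¹) (z - ξ) +
      (1 + ‖z‖) ^ (-(6 + ε)) * (1 + ‖ξ‖) ^ (-(2 + ε)))

theorem integrable_hilbertSchmidtBound (q C : ℝ) {ε : ℝ} (hε : 0 < ε) :
    Integrable (Function.uncurry (hilbertSchmidtBound q ε C)) (volume.prod volume) := by
  have hdim : Module.finrank ℝ ℂ = 2 := Complex.finrank_real_complex
  have hV : Integrable fun ξ : ℂ => (1 + ‖ξ‖) ^ (-(2 + ε)) :=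
    integrable_one_add_norm (by rw [hdim]; push_cast; linarith)
  have hW : Integrable fun z : ℂ => (1 + ‖z‖) ^ (-(6 + ε)) :=
    integrable_one_add_norm (by rw [hdim]; push_cast; linarith)
  have hψ := integrable_indicator_ball_norm_inv (μ := (volume : Measure ℂ)) (by omega) 1
  exact ((hV.convolution_integrand (ContinuousLinearMap.mul ℝ ℝ) hψ).add
    (hW.mul_prod hV)).const_mul _

section HilbertSchmidt

variable {g : ℂ → ℂ → ℂ} {v : ℂ → ℂ} {q ε C : ℝ}

theorem hilbertSchmidtIntegrand_nonneg (l z ξ : ℂ) : 0 ≤ hilbertSchmidtIntegrand g v ε l z ξ := by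
  unfold hilbertSchmidtIntegrand; positivity

theorem hilbertSchmidtIntegrand_le (hε : 0 < ε) (hC : 0 ≤ C)
    (hvb : ∀ z : ℂ, ‖v z‖ ≤ q * (1 + ‖z‖) ^ (-(4 + ε)))
    (hb1 : ∀ l : ℂ, l ≠ 0 → ∀ w : ℂ, w ≠ 0 → ‖g l w‖ ≤ C / ‖l‖ * (1 + 1 / ‖w‖))
    (hb2 : ∀ l : ℂ, 1 < ‖l‖ → ∀ w : ℂ, w ≠ 0 → ‖l‖ * ‖w‖ < 1 →
      ‖g l w‖ ≤ C * (|Real.log (‖l‖ ^ 2)| + |Real.log (‖w‖ ^ 2)| + 1))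
    {l z ξ : ℂ} (hl : 1 < ‖l‖) (hzξ : z ≠ ξ) :
    hilbertSchmidtIntegrand g v ε l z ξ ≤ hilbertSchmidtBound q ε C z ξ := by
  have hw : z - ξ ≠ 0 := sub_ne_zero.2 hzξ
  have hg : ‖g l (z - ξ)‖ ^ 2 ≤ 81 * C ^ 2 * max ‖z - ξ‖⁻¹ 1 :=
    sq_le_of_near_far_bounds hC (norm_pos_iff.2 hw) hl (norm_nonneg _)
      (hb1 l (norm_pos_iff.1 (by linarith)) _ hw) (hb2 l hl _ hw)
  have hv : ‖v ξ‖ ^ 2 * (1 + ‖ξ‖) ^ (6 + ε) ≤ q ^ 2 * (1 + ‖ξ‖) ^ (-(2 + ε)) := by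
    convert sq_mul_rpow_le_of_le_rpow (by positivity) (norm_nonneg _) (hvb ξ) using 3
    ring
  have hW : (1 + ‖z‖) ^ (-(6 + ε)) ≤ 1 :=
    Real.rpow_le_one_of_one_le_of_nonpos (by simp) (by linarith)
  calc hilbertSchmidtIntegrand g v ε l z ξ
      = ‖g l (z - ξ)‖ ^ 2 * (‖v ξ‖ ^ 2 * (1 + ‖ξ‖) ^ (6 + ε)) * (1 + ‖z‖) ^ (-(6 + ε)) := by
        unfold hilbertSchmidtIntegrand; ring
    _ ≤ 81 * C ^ 2 * max ‖z - ξ‖⁻¹ 1 * (q ^ 2 * (1 + ‖ξ‖) ^ (-(2 + ε))) *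
        (1 + ‖z‖) ^ (-(6 + ε)) := by gcongr
    _ = 81 * C ^ 2 * q ^ 2 * (1 + ‖ξ‖) ^ (-(2 + ε)) *
        (max ‖z - ξ‖⁻¹ 1 * (1 + ‖z‖) ^ (-(6 + ε))) := by ring
    _ ≤ 81 * C ^ 2 * q ^ 2 * (1 + ‖ξ‖) ^ (-(2 + ε)) *
        ((ball (0 : ℂ) 1).indicator (fun w => ‖w‖⁻¹) (z - ξ) + (1 + ‖z‖) ^ (-(6 + ε))) := by
        gcongr; exact max_norm_inv_one_mul_le _ (by positivity) hW
    _ = hilbertSchmidtBound q ε C z ξ := by unfold hilbertSchmidtBound; ring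

theorem tendsto_hilbertSchmidtIntegrand
    (hb1 : ∀ l : ℂ, l ≠ 0 → ∀ w : ℂ, w ≠ 0 → ‖g l w‖ ≤ C / ‖l‖ * (1 + 1 / ‖w‖))
    {z ξ : ℂ} (hzξ : z ≠ ξ) :
    Tendsto (fun l => hilbertSchmidtIntegrand g v ε l z ξ) (comap (‖·‖) atTop) (𝓝 0) := by
  have hw : z - ξ ≠ 0 := sub_ne_zero.2 hzξ
  have hnorm : Tendsto (fun l : ℂ => ‖l‖) (comap (‖·‖) atTop) atTop := tendsto_comap
  have hg : Tendsto (fun l => ‖g l (z - ξ)‖) (comap (‖·‖) atTop) (𝓝 0) := by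
    have hbound :
        Tendsto (fun l : ℂ => C / ‖l‖ * (1 + 1 / ‖z - ξ‖)) (comap (‖·‖) atTop) (𝓝 0) := by
      simpa using (tendsto_const_nhds.div_atTop hnorm).mul_const (1 + 1 / ‖z - ξ‖)
    refine squeeze_zero' (Eventually.of_forall fun l => norm_nonneg _) ?_ hbound
    filter_upwards [hnorm.eventually (eventually_gt_atTop 0)] with l hl
    exact hb1 l (norm_pos_iff.1 hl) _ hw
  simpa [hilbertSchmidtIntegrand] using (((hg.pow 2).mul_const _).mul_const _).mul_const _

end HilbertSchmidt

theorem stmt19_general (g : ℂ → ℂ → ℂ) (v : ℂ → ℂ) (q ε C : ℝ)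
    (hε : 0 < ε) (hC : 0 < C)
    (hgm : ∀ l : ℂ, Measurable (g l)) (hv : Measurable v)
    (hvb : ∀ z : ℂ, ‖v z‖ ≤ q * (1 + ‖z‖) ^ (-(4 + ε)))
    (hb1 : ∀ l : ℂ, l ≠ 0 → ∀ w : ℂ, w ≠ 0 →
      ‖g l w‖ ≤ C / ‖l‖ * (1 + 1 / ‖w‖))
    (hb2 : ∀ l : ℂ, 1 < ‖l‖ → ∀ w : ℂ, w ≠ 0 →
      ‖l‖ * ‖w‖ < 1 →
      ‖g l w‖ ≤
        C * (|Real.log (‖l‖ ^ 2)| + |Real.log (‖w‖ ^ 2)| + 1)) :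
    Filter.Tendsto
      (fun l : ℂ => ∫ z : ℂ, ∫ ξ : ℂ,
        ‖g l (z - ξ)‖ ^ 2 * ‖v ξ‖ ^ 2 *
          (1 + ‖ξ‖) ^ (6 + ε) * (1 + ‖z‖) ^ (-(6 + ε)))
      (Filter.comap (fun z : ℂ => ‖z‖) Filter.atTop) (nhds 0) := by
  have hmeas (l : ℂ) : AEStronglyMeasurable
      (Function.uncurry (hilbertSchmidtIntegrand g v ε l)) (volume.prod volume) := by
    have := hgm l
    unfold hilbertSchmidtIntegrand Function.uncurry
    fun_prop
  have hbound : ∀ᶠ l in comap (‖·‖) atTop, ∀ᵐ p ∂(volume : Measure ℂ).prod volume,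
      ‖hilbertSchmidtIntegrand g v ε l p.1 p.2‖ ≤ hilbertSchmidtBound q ε C p.1 p.2 :=
    (tendsto_comap.eventually (eventually_gt_atTop 1)).mono fun l hl => ae_prod_ne.mono
      fun p hp => (Real.norm_of_nonneg (hilbertSchmidtIntegrand_nonneg _ _ _)).trans_le
        (hilbertSchmidtIntegrand_le hε hC.le hvb hb1 hb2 hl hp)
  have := tendsto_integral_integral_of_dominated_convergence (f := 0) _
    (Eventually.of_forall hmeas) hbound (integrable_hilbertSchmidtBound q C hε)
    (ae_prod_ne.mono fun p => tendsto_hilbertSchmidtIntegrand hb1)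
  rwa [integral_zero'] at this

/-- Vanishing of the Hilbert–Schmidt norm of H^r(λ) as |λ| → ∞, given the two
pointwise bounds on g^r and the decay of v. -/
theorem stmt19 (g : ℂ → ℂ → ℂ) (v : ℂ → ℂ) (q ε C : ℝ)
    (hq : 0 < q) (hε : 0 < ε) (hC : 0 < C)
    (hgm : ∀ l : ℂ, Measurable (g l)) (hv : Measurable v)
    (hvb : ∀ z : ℂ, ‖v z‖ ≤ q * (1 + ‖z‖) ^ (-(4 + ε)))
    (hb1 : ∀ l : ℂ, l ≠ 0 → ∀ w : ℂ, w ≠ 0 →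
      ‖g l w‖ ≤ C / ‖l‖ * (1 + 1 / ‖w‖))
    (hb2 : ∀ l : ℂ, 1 < ‖l‖ → ∀ w : ℂ, w ≠ 0 →
      ‖l‖ * ‖w‖ < 1 →
      ‖g l w‖ ≤
        C * (|Real.log (‖l‖ ^ 2)| + |Real.log (‖w‖ ^ 2)| + 1)) :
    Filter.Tendsto
      (fun l : ℂ => ∫ z : ℂ, ∫ ξ : ℂ,
        ‖g l (z - ξ)‖ ^ 2 * ‖v ξ‖ ^ 2 *
          (1 + ‖ξ‖) ^ (6 + ε) * (1 + ‖z‖) ^ (-(6 + ε)))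
      (Filter.comap (fun z : ℂ => ‖z‖) Filter.atTop) (nhds 0) :=
  stmt19_general g v q ε C hε hC hgm hv hvb hb1 hb2
end
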